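/- (Nonparametric identification of ATETS under no state dependence.) In the discrete data-combination setup, assume experimental internal validity, external validity, latent unconfounding, consistency, strict overlap, and the no-state-dependence assumption that under P(· | G=1) the pair (Y2(1),Y2(0)) is independent of (Y1(1),Y1(0)). Then, provided P(Y1(1)=0, G=1) > 0, the average treatment effect on the treated survivors is identified: E[Y2(1) | Y1(1)=0, G=1] − E[Y2(0) | Y1(1)=0, G=1] = Σ_{x} P(X=x | G=1) [ Σ_{y} P(Y1=y | W=1, X=x, G=0) E[Y2 | Y1=y, W=1, X=x, G=1] − Σ_{y} P(Y1=y | W=0, X=x, G=0) E[Y2 | Y1=y, W=0, X=x, G=1] ]. -/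

import Mathlib

open MeasureTheory ProbabilityTheory

/-- Conditional probability `P(A | B)` as a real number. -/
noncomputable def cP {Ω : Type*} [MeasurableSpace Ω] (P : Measure Ω) (A B : Set Ω) : ℝ :=
  ((P[|B]) A).toReal

/-- Conditional expectation `E[Y | B]` (expectation under the conditional measure). -/
noncomputable def cE {Ω : Type*} [MeasurableSpace Ω] (P : Measure Ω) (Y : Ω → ℝ) (B : Set Ω) :
    ℝ :=
  ∫ ω, Y ω ∂(P[|B])

/-! Under no state dependence, conditioning on survival `Y1(1) = 0` does not change the law of
`Y2(w)` in the observational group, so each term of the ATETS is `E[Y2(w) | G = 1]`. Splitting it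
by total expectation over `X` and then over `Y1(w)`, external and internal validity turn
`P(Y1(w) = y | X = x, G = 1)` into the experimental `P(Y1 = y | W = w, X = x, G = 0)`, and latent
unconfounding with consistency turns `E[Y2(w) | Y1(w) = y, X = x, G = 1]` into the observed
`E[Y2 | Y1 = y, W = w, X = x, G = 1]`. -/

section Conditioning

variable {Ω : Type*} [MeasurableSpace Ω]

lemma MeasureTheory.Integrable.cond {μ : Measure Ω} {f : Ω → ℝ} (hf : Integrable f μ)
    (s : Set Ω) : Integrable f (μ[|s]) := by
  by_cases hs : μ s = 0
  · simp [cond_eq_zero_of_meas_eq_zero hs]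
  · exact hf.restrict.smul_measure (ENNReal.inv_ne_top.mpr hs)

lemma ProbabilityTheory.IndepFun.apply_of_pair {β γ : Type*} [MeasurableSpace β]
    [MeasurableSpace γ] {μ : Measure Ω} {T : Ω → γ} {F : Bool → Ω → β}
    (h : IndepFun T (fun ω => (F true ω, F false ω)) μ) (w : Bool) : IndepFun T (F w) μ := by
  cases w
  · exact h.comp measurable_id measurable_snd
  · exact h.comp measurable_id measurable_fst

lemma ProbabilityTheory.identDistrib_cond_of_indepFun {β γ : Type*} [MeasurableSpace β]
    [MeasurableSpace γ] {μ : Measure Ω} [IsFiniteMeasure μ] {S : Ω → β} {T : Ω → γ}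
    (hS : Measurable S) (hT : Measurable T) (hind : IndepFun T S μ) {E : Set γ}
    (hE : MeasurableSet E) (hpos : μ (T ⁻¹' E) ≠ 0) : IdentDistrib S S (μ[|T ⁻¹' E]) μ where
  aemeasurable_fst := hS.aemeasurable
  aemeasurable_snd := hS.aemeasurable
  map_eq := by
    ext F hF
    rw [Measure.map_apply hS hF, Measure.map_apply hS hF, cond_apply (hT hE),
      hind.measure_inter_preimage_eq_mul E F hE hF,
      ENNReal.inv_mul_cancel_left hpos (measure_ne_top μ _)]

lemma cE_inter_eq_of_indepFun {γ : Type*} [MeasurableSpace γ] [MeasurableSingletonClass γ]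
    {P : Measure Ω} [IsFiniteMeasure P] {f : Ω → ℝ} {T : Ω → γ} {B : Set Ω} {t : γ}
    (hB : MeasurableSet B) (hf : Measurable f) (hT : Measurable T)
    (hind : IndepFun T f (P[|B])) (hpos : P ({ω | T ω = t} ∩ B) ≠ 0) :
    cE P f ({ω | T ω = t} ∩ B) = cE P f B := by
  have hTt : MeasurableSet {ω | T ω = t} := hT (measurableSet_singleton t)
  rw [cE, cE, Set.inter_comm, ← cond_cond_eq_cond_inter hB hTt]
  refine (identDistrib_cond_of_indepFun hf hT hind (measurableSet_singleton t) ?_).integral_eq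
  exact (cond_pos_of_inter_ne_zero hB (by rwa [Set.inter_comm] at hpos)).ne'

lemma cP_inter_eq_of_indepFun {β γ : Type*} [MeasurableSpace β] [MeasurableSingletonClass β]
    [MeasurableSpace γ] [MeasurableSingletonClass γ] {P : Measure Ω} [IsFiniteMeasure P]
    {S : Ω → β} {T : Ω → γ} {B : Set Ω} {s : β} {t : γ}
    (hB : MeasurableSet B) (hS : Measurable S) (hT : Measurable T)
    (hind : IndepFun T S (P[|B])) (hpos : P ({ω | T ω = t} ∩ B) ≠ 0) :
    cP P {ω | S ω = s} ({ω | T ω = t} ∩ B) = cP P {ω | S ω = s} B := by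
  have hTt : MeasurableSet {ω | T ω = t} := hT (measurableSet_singleton t)
  rw [cP, cP, Set.inter_comm, ← cond_cond_eq_cond_inter hB hTt]
  refine congrArg ENNReal.toReal
    ((identDistrib_cond_of_indepFun hS hT hind (measurableSet_singleton t) ?_).measure_mem_eq
      (measurableSet_singleton s))
  exact (cond_pos_of_inter_ne_zero hB (by rwa [Set.inter_comm] at hpos)).ne'

lemma cP_congr_left {P : Measure Ω} {A A' B : Set Ω} (hB : MeasurableSet B)
    (h : ∀ ω ∈ B, ω ∈ A ↔ ω ∈ A') : cP P A B = cP P A' B := by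
  rw [cP, cP, ← cond_inter_self hB A, ← cond_inter_self hB A']
  congr 2
  ext ω
  exact and_congr_right (h ω)

lemma cE_eq_sum_cP_mul_cE {β : Type*} [Fintype β] [MeasurableSpace β]
    [MeasurableSingletonClass β] {P : Measure Ω} [IsFiniteMeasure P] {f : Ω → ℝ} {T : Ω → β}
    {B : Set Ω} (hB : MeasurableSet B) (hT : Measurable T) (hf : Integrable f (P[|B])) :
    cE P f B = ∑ b, cP P {ω | T ω = b} B * cE P f ({ω | T ω = b} ∩ B) := by
  have hTb (b : β) : MeasurableSet {ω | T ω = b} := hT (measurableSet_singleton b)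
  calc cE P f B = ∫ ω, f ω ∂(∑ b, (P[|B]) (T ⁻¹' {b}) • P[|B][|T ⁻¹' {b}]) := by
        rw [sum_meas_smul_cond_fiber hT, cE]
    _ = ∑ b, cP P {ω | T ω = b} B * cE P f ({ω | T ω = b} ∩ B) := by
        rw [integral_finsetSum_measure fun b _ =>
          (hf.cond _).smul_measure (measure_ne_top _ _)]
        refine Finset.sum_congr rfl fun b _ => ?_
        rw [integral_smul_measure, smul_eq_mul, cE, Set.inter_comm,
          ← cond_cond_eq_cond_inter hB (hTb b)]
        rfl

end Conditioning

section DataCombination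

variable {Ω α β γ δ : Type*} [MeasurableSpace Ω] [MeasurableSpace α] [MeasurableSingletonClass α]
  [MeasurableSpace β] [MeasurableSingletonClass β] [MeasurableSpace γ]
  [MeasurableSingletonClass γ] [MeasurableSpace δ] [MeasurableSingletonClass δ]
  {P : Measure Ω} [IsFiniteMeasure P] {W : Ω → α} {X : Ω → γ} {G : Ω → δ}

/-- External validity carries the law of `Y w` given `X = x` from group `g₁` to group `g₀`, where
internal validity and consistency identify it with the law of the observed outcome in arm `w`. -/
lemma cP_eq_cP_observed_of_indepFun {Y : α → Ω → β} {w : α} {x : γ} {g₁ g₀ : δ} {y : β}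
    (hW : Measurable W) (hX : Measurable X) (hG : Measurable G) (hY : Measurable (Y w))
    (hEV : IndepFun G (Y w) (P[|{ω | X ω = x}]))
    (hIV : IndepFun W (Y w) (P[|{ω | X ω = x} ∩ {ω | G ω = g₀}]))
    (hpos₁ : P ({ω | X ω = x} ∩ {ω | G ω = g₁}) ≠ 0)
    (hpos₀ : P ({ω | W ω = w} ∩ {ω | X ω = x} ∩ {ω | G ω = g₀}) ≠ 0) :
    cP P {ω | Y w ω = y} ({ω | X ω = x} ∩ {ω | G ω = g₁}) =
      cP P {ω | Y (W ω) ω = y} ({ω | W ω = w} ∩ {ω | X ω = x} ∩ {ω | G ω = g₀}) := by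
  have hXx : MeasurableSet {ω | X ω = x} := hX (measurableSet_singleton x)
  have hXG₀ : MeasurableSet ({ω | X ω = x} ∩ {ω | G ω = g₀}) :=
    hXx.inter (hG (measurableSet_singleton g₀))
  have hWXG₀ : MeasurableSet ({ω | W ω = w} ∩ {ω | X ω = x} ∩ {ω | G ω = g₀}) :=
    (hW (measurableSet_singleton w)).inter hXx |>.inter (hG (measurableSet_singleton g₀))
  have hXG₀pos : P ({ω | X ω = x} ∩ {ω | G ω = g₀}) ≠ 0 := by
    refine (measure_pos_of_superset ?_ hpos₀).ne'
    rw [Set.inter_assoc]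
    exact Set.inter_subset_right
  calc cP P {ω | Y w ω = y} ({ω | X ω = x} ∩ {ω | G ω = g₁})
      = cP P {ω | Y w ω = y} {ω | X ω = x} := by
        rw [Set.inter_comm]
        exact cP_inter_eq_of_indepFun hXx hY hG hEV (by rwa [Set.inter_comm] at hpos₁)
    _ = cP P {ω | Y w ω = y} ({ω | X ω = x} ∩ {ω | G ω = g₀}) := by
        rw [Set.inter_comm]
        exact (cP_inter_eq_of_indepFun hXx hY hG hEV (by rwa [Set.inter_comm] at hXG₀pos)).symm
    _ = cP P {ω | Y w ω = y} ({ω | W ω = w} ∩ {ω | X ω = x} ∩ {ω | G ω = g₀}) := by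
        rw [Set.inter_assoc]
        exact (cP_inter_eq_of_indepFun hXG₀ hY hW hIV (by rwa [Set.inter_assoc] at hpos₀)).symm
    _ = cP P {ω | Y (W ω) ω = y} ({ω | W ω = w} ∩ {ω | X ω = x} ∩ {ω | G ω = g₀}) := by
        refine cP_congr_left hWXG₀ fun ω hω => ?_
        show Y w ω = y ↔ Y (W ω) ω = y
        rw [hω.1.1]

lemma cE_eq_cE_observed_of_indepFun {Y1 : α → Ω → β} {Y2 : α → Ω → ℝ} {w : α} {x : γ} {g : δ}
    {y : β} (hW : Measurable W) (hX : Measurable X) (hG : Measurable G)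
    (hY1 : Measurable (Y1 w)) (hY2 : Measurable (Y2 w))
    (hLU : IndepFun W (Y2 w) (P[|{ω | Y1 w ω = y} ∩ {ω | X ω = x} ∩ {ω | G ω = g}]))
    (hpos : P ({ω | Y1 (W ω) ω = y} ∩ {ω | W ω = w} ∩ {ω | X ω = x} ∩ {ω | G ω = g}) ≠ 0) :
    cE P (Y2 w) ({ω | Y1 w ω = y} ∩ {ω | X ω = x} ∩ {ω | G ω = g}) =
      cE P (fun ω => Y2 (W ω) ω)
        ({ω | Y1 (W ω) ω = y} ∩ {ω | W ω = w} ∩ {ω | X ω = x} ∩ {ω | G ω = g}) := by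
  set B := {ω | Y1 w ω = y} ∩ {ω | X ω = x} ∩ {ω | G ω = g}
  have hB : MeasurableSet B := (hY1 (measurableSet_singleton y)).inter
    (hX (measurableSet_singleton x)) |>.inter (hG (measurableSet_singleton g))
  have hWw : MeasurableSet {ω | W ω = w} := hW (measurableSet_singleton w)
  have hset : {ω | Y1 (W ω) ω = y} ∩ {ω | W ω = w} ∩ {ω | X ω = x} ∩ {ω | G ω = g} =
      {ω | W ω = w} ∩ B := by
    ext ω
    simp only [B, Set.mem_inter_iff, Set.mem_ofPred_eq]
    constructor
    · rintro ⟨⟨⟨hy, rfl⟩, hx⟩, hg⟩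
      exact ⟨rfl, ⟨hy, hx⟩, hg⟩
    · rintro ⟨rfl, ⟨hy, hx⟩, hg⟩
      exact ⟨⟨⟨hy, rfl⟩, hx⟩, hg⟩
  rw [hset] at hpos ⊢
  rw [← cE_inter_eq_of_indepFun hB hY2 hW hLU hpos]
  exact integral_congr_ae (ae_cond_of_forall_mem (hWw.inter hB) fun ω hω =>
    congrArg (Y2 · ω) hω.1.symm)

end DataCombination

theorem ATETS_identification_no_state_dependence_general
    {Ω : Type*} [MeasurableSpace Ω] (P : Measure Ω) [IsProbabilityMeasure P]
    {𝒳 : Type*} [Fintype 𝒳] [MeasurableSpace 𝒳] [MeasurableSingletonClass 𝒳]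
    (W G : Ω → Bool) (X : Ω → 𝒳) (Y1 : Bool → Ω → Bool) (Y2 : Bool → Ω → ℝ)
    (hW : Measurable W) (hG : Measurable G) (hX : Measurable X)
    (hY1 : ∀ w, Measurable (Y1 w)) (hY2 : ∀ w, Measurable (Y2 w))
    (hY2int : ∀ w, Integrable (Y2 w) P)
    -- experimental internal validity
    (hIV : ∀ x : 𝒳, 0 < P ({ω | X ω = x} ∩ {ω | G ω = false}) →
      IndepFun W (fun ω => (Y2 true ω, Y2 false ω, Y1 true ω, Y1 false ω))
        (P[|{ω | X ω = x} ∩ {ω | G ω = false}]))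
    -- external validity
    (hEV : ∀ x : 𝒳, 0 < P {ω | X ω = x} →
      IndepFun G (fun ω => (Y2 true ω, Y2 false ω, Y1 true ω, Y1 false ω))
        (P[|{ω | X ω = x}]))
    -- latent unconfounding
    (hLU : ∀ (w : Bool) (y : Bool) (x : 𝒳),
      0 < P ({ω | Y1 w ω = y} ∩ {ω | X ω = x} ∩ {ω | G ω = true}) →
      IndepFun W (Y2 w) (P[|{ω | Y1 w ω = y} ∩ {ω | X ω = x} ∩ {ω | G ω = true}]))
    -- no state dependence under the observational conditional measure
    (hNSD : IndepFun (fun ω => (Y2 true ω, Y2 false ω))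
      (fun ω => (Y1 true ω, Y1 false ω)) (P[|{ω | G ω = true}]))
    -- strict overlap: every conditioning event has positive probability
    (hSurv : 0 < P ({ω | Y1 true ω = false} ∩ {ω | G ω = true}))
    (hOv0 : ∀ (w : Bool) (x : 𝒳),
      0 < P ({ω | W ω = w} ∩ {ω | X ω = x} ∩ {ω | G ω = false}))
    (hOvX1 : ∀ x : 𝒳, 0 < P ({ω | X ω = x} ∩ {ω | G ω = true}))
    (hOv1 : ∀ (w : Bool) (y : Bool) (x : 𝒳),
      0 < P ({ω | Y1 (W ω) ω = y} ∩ {ω | W ω = w} ∩ {ω | X ω = x} ∩ {ω | G ω = true}))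
    (hLUpos : ∀ (w : Bool) (y : Bool) (x : 𝒳),
      0 < P ({ω | Y1 w ω = y} ∩ {ω | X ω = x} ∩ {ω | G ω = true})) :
    cE P (Y2 true) ({ω | Y1 true ω = false} ∩ {ω | G ω = true}) -
      cE P (Y2 false) ({ω | Y1 true ω = false} ∩ {ω | G ω = true}) =
    ∑ x : 𝒳, cP P {ω | X ω = x} {ω | G ω = true} *
      ((∑ y : Bool,
          cP P {ω | Y1 (W ω) ω = y}
            ({ω | W ω = true} ∩ {ω | X ω = x} ∩ {ω | G ω = false}) *
          cE P (fun ω => Y2 (W ω) ω)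
            ({ω | Y1 (W ω) ω = y} ∩ {ω | W ω = true} ∩ {ω | X ω = x} ∩ {ω | G ω = true})) -
        (∑ y : Bool,
          cP P {ω | Y1 (W ω) ω = y}
            ({ω | W ω = false} ∩ {ω | X ω = x} ∩ {ω | G ω = false}) *
          cE P (fun ω => Y2 (W ω) ω)
            ({ω | Y1 (W ω) ω = y} ∩ {ω | W ω = false} ∩ {ω | X ω = x} ∩ {ω | G ω = true}))) := by
  have hGt : MeasurableSet {ω | G ω = true} := hG (measurableSet_singleton true)
  have arm (w : Bool) :
      cE P (Y2 w) ({ω | Y1 true ω = false} ∩ {ω | G ω = true}) =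
        ∑ x : 𝒳, cP P {ω | X ω = x} {ω | G ω = true} *
          ∑ y : Bool,
            cP P {ω | Y1 (W ω) ω = y} ({ω | W ω = w} ∩ {ω | X ω = x} ∩ {ω | G ω = false}) *
            cE P (fun ω => Y2 (W ω) ω)
              ({ω | Y1 (W ω) ω = y} ∩ {ω | W ω = w} ∩ {ω | X ω = x} ∩ {ω | G ω = true}) := by
    have hNSDw : IndepFun (Y1 true) (Y2 w) (P[|{ω | G ω = true}]) :=
      (hNSD.symm.comp measurable_fst measurable_id).apply_of_pair w
    rw [cE_inter_eq_of_indepFun hGt (hY2 w) (hY1 true) hNSDw hSurv.ne',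
      cE_eq_sum_cP_mul_cE hGt hX ((hY2int w).cond _)]
    refine Finset.sum_congr rfl fun x _ => congrArg _ ?_
    have hXx : 0 < P {ω | X ω = x} := (hOvX1 x).trans_le (measure_mono Set.inter_subset_left)
    have hXG₀ : 0 < P ({ω | X ω = x} ∩ {ω | G ω = false}) :=
      (hOv0 w x).trans_le (measure_mono (Set.inter_assoc _ _ _ ▸ Set.inter_subset_right))
    have hXGt : MeasurableSet ({ω | X ω = x} ∩ {ω | G ω = true}) :=
      (hX (measurableSet_singleton x)).inter hGt
    rw [cE_eq_sum_cP_mul_cE hXGt (hY1 w) ((hY2int w).cond _)]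
    refine Finset.sum_congr rfl fun y _ => ?_
    rw [← Set.inter_assoc, cP_eq_cP_observed_of_indepFun hW hX hG (hY1 w)
        (((hEV x hXx).comp measurable_id (measurable_snd.comp measurable_snd)).apply_of_pair w)
        (((hIV x hXG₀).comp measurable_id (measurable_snd.comp measurable_snd)).apply_of_pair w)
        (hOvX1 x).ne' (hOv0 w x).ne',
      cE_eq_cE_observed_of_indepFun hW hX hG (hY1 w) (hY2 w) (hLU w y x (hLUpos w y x))
        (hOv1 w y x).ne']
  rw [arm true, arm false, ← Finset.sum_sub_distrib]
  simp only [mul_sub]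

/-- Nonparametric identification of the average treatment effect on the
treated survivors (ATETS) in the discrete data-combination setup, under experimental internal
validity, external validity, latent unconfounding, consistency, strict overlap, and the
no-state-dependence assumption. -/
theorem ATETS_identification_no_state_dependence
    {Ω : Type*} [MeasurableSpace Ω] (P : Measure Ω) [IsProbabilityMeasure P]
    {𝒳 : Type*} [Fintype 𝒳] [MeasurableSpace 𝒳] [MeasurableSingletonClass 𝒳]
    (W G : Ω → Bool) (X : Ω → 𝒳) (Y1 : Bool → Ω → Bool) (Y2 : Bool → Ω → ℝ)
    (hW : Measurable W) (hG : Measurable G) (hX : Measurable X)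
    (hY1 : ∀ w, Measurable (Y1 w)) (hY2 : ∀ w, Measurable (Y2 w))
    (hY2int : ∀ w, Integrable (Y2 w) P)
    -- experimental internal validity
    (hIV : ∀ x : 𝒳, 0 < P ({ω | X ω = x} ∩ {ω | G ω = false}) →
      IndepFun W (fun ω => (Y2 true ω, Y2 false ω, Y1 true ω, Y1 false ω))
        (P[|{ω | X ω = x} ∩ {ω | G ω = false}]))
    -- external validity
    (hEV : ∀ x : 𝒳, 0 < P {ω | X ω = x} →
      IndepFun G (fun ω => (Y2 true ω, Y2 false ω, Y1 true ω, Y1 false ω))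
        (P[|{ω | X ω = x}]))
    -- latent unconfounding
    (hLU : ∀ (w : Bool) (y : Bool) (x : 𝒳),
      0 < P ({ω | Y1 w ω = y} ∩ {ω | X ω = x} ∩ {ω | G ω = true}) →
      IndepFun W (Y2 w) (P[|{ω | Y1 w ω = y} ∩ {ω | X ω = x} ∩ {ω | G ω = true}]))
    -- no state dependence under the observational conditional measure
    (hNSD : IndepFun (fun ω => (Y2 true ω, Y2 false ω))
      (fun ω => (Y1 true ω, Y1 false ω)) (P[|{ω | G ω = true}]))
    -- strict overlap: every conditioning event has positive probability
    (hG1 : 0 < P {ω | G ω = true})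
    (hSurv : 0 < P ({ω | Y1 true ω = false} ∩ {ω | G ω = true}))
    (hOv0 : ∀ (w : Bool) (x : 𝒳),
      0 < P ({ω | W ω = w} ∩ {ω | X ω = x} ∩ {ω | G ω = false}))
    (hOvX1 : ∀ x : 𝒳, 0 < P ({ω | X ω = x} ∩ {ω | G ω = true}))
    (hOv1 : ∀ (w : Bool) (y : Bool) (x : 𝒳),
      0 < P ({ω | Y1 (W ω) ω = y} ∩ {ω | W ω = w} ∩ {ω | X ω = x} ∩ {ω | G ω = true}))
    (hLUpos : ∀ (w : Bool) (y : Bool) (x : 𝒳),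
      0 < P ({ω | Y1 w ω = y} ∩ {ω | X ω = x} ∩ {ω | G ω = true})) :
    cE P (Y2 true) ({ω | Y1 true ω = false} ∩ {ω | G ω = true}) -
      cE P (Y2 false) ({ω | Y1 true ω = false} ∩ {ω | G ω = true}) =
    ∑ x : 𝒳, cP P {ω | X ω = x} {ω | G ω = true} *
      ((∑ y : Bool,
          cP P {ω | Y1 (W ω) ω = y}
            ({ω | W ω = true} ∩ {ω | X ω = x} ∩ {ω | G ω = false}) *
          cE P (fun ω => Y2 (W ω) ω)
            ({ω | Y1 (W ω) ω = y} ∩ {ω | W ω = true} ∩ {ω | X ω = x} ∩ {ω | G ω = true})) -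
        (∑ y : Bool,
          cP P {ω | Y1 (W ω) ω = y}
            ({ω | W ω = false} ∩ {ω | X ω = x} ∩ {ω | G ω = false}) *
          cE P (fun ω => Y2 (W ω) ω)
            ({ω | Y1 (W ω) ω = y} ∩ {ω | W ω = false} ∩ {ω | X ω = x} ∩ {ω | G ω = true}))) :=
  ATETS_identification_no_state_dependence_general P W G X Y1 Y2 hW hG hX hY1 hY2 hY2int hIV hEV hLU
    hNSD hSurv hOv0 hOvX1 hOv1 hLUpos
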